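/- (Bound for the bad-modulus factor S⁽²⁾.) Assume gcd(λ₀,…,λ_n, L) = 1. With D := det(2M_F), let q = q₁q₂ where gcd(q₁, 2LD) = 1 and every prime factor of q₂ divides 2LD. Then there is a constant C depending only on F such that, uniformly for all q, c ∈ ℤ^{n+1}, L and λ: |S⁽²⁾_{q,L,λ}(c)| ≤ C·q₂^{(n+3)/2}·Lⁿ·gcd(q₂, L)^{1/2}. -/

import Mathlib

open scoped BigOperators
open Finset Filter Topology Matrix

noncomputable section

namespace Quad

/-- The integral quadratic form `x ↦ xᵀ M_F x` where `N = 2·M_F` is an integer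
symmetric matrix with even diagonal, so that the value `(xᵀ N x)/2` is an integer. -/
def Fint {m : ℕ} (N : Matrix (Fin m) (Fin m) ℤ) (x : Fin m → ℤ) : ℤ :=
  (∑ i, ∑ j, N i j * x i * x j) / 2

/-- The corresponding real quadratic form `x ↦ xᵀ M_F x`, `N = 2·M_F`. -/
def FR {m : ℕ} (N : Matrix (Fin m) (Fin m) ℤ) (x : Fin m → ℝ) : ℝ :=
  (∑ i, ∑ j, (N i j : ℝ) * x i * x j) / 2

/-- The real quadratic form attached to a real matrix. -/
def QFR {m : ℕ} (A : Matrix (Fin m) (Fin m) ℝ) (x : Fin m → ℝ) : ℝ :=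
  ∑ i, ∑ j, A i j * x i * x j

/-- The gradient `∇F(x) = 2 M_F x = N x`. -/
def grad {m : ℕ} (N : Matrix (Fin m) (Fin m) ℤ) (x : Fin m → ℤ) : Fin m → ℤ :=
  fun i => ∑ j, N i j * x j

/-- `H_{λ,L}(y) = F(λ)/L + ∇F(λ)·y` (assuming `L ∣ F(λ)`). -/
def Hpoly {m : ℕ} (N : Matrix (Fin m) (Fin m) ℤ) (L : ℕ) (lam y : Fin m → ℤ) : ℤ :=
  Fint N lam / (L : ℤ) + ∑ i, grad N lam i * y i

/-- The additive character `e_q(t) = exp(2πit/q)`. -/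
def eChar (q : ℕ) (t : ℝ) : ℂ := Complex.exp (2 * Real.pi * Complex.I * (t : ℂ) / (q : ℂ))

/-- The dual form value `N_F(c) = cᵀ · adj(N) · c`, `N = 2 M_F`; this equals `2ⁿ F*(c)`. -/
def dualF {m : ℕ} (N : Matrix (Fin m) (Fin m) ℤ) (c : Fin m → ℤ) : ℤ :=
  ∑ i, ∑ j, N.adjugate i j * c i * c j

/-- The embedding sending the `i`-th of the `n-1` variables of `F₂` to coordinate `i+2`. -/
def emb {n : ℕ} (i : Fin (n-1)) : Fin (n+1) := ⟨i.val + 2, by have h := i.isLt; omega⟩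

/-- The quadratic Gauss sum `ι_q = Σ_{x mod q} e_q(x²)`. -/
def iotaSum (q : ℕ) : ℂ := ∑ x ∈ Finset.range q, eChar q ((x : ℝ)^2)

open Classical in
/-- The exponential sum `S_{q,L,λ}(c)`. -/
def Sq (n : ℕ) (N : Matrix (Fin (n+1)) (Fin (n+1)) ℤ) (q L : ℕ)
    (lam c : Fin (n+1) → ℤ) : ℂ :=
  ∑ a ∈ (Finset.range q).filter (fun a => Nat.gcd a q = 1),
    ∑ σ ∈ (Finset.univ : Finset (Fin (n+1) → Fin (q*L))).filter
        (fun σ => (L : ℤ) ∣ Hpoly N L lam (fun i => ((σ i : ℕ) : ℤ))),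
      eChar (q*L)
        (((a : ℤ) * (Hpoly N L lam (fun i => ((σ i : ℕ) : ℤ))
            + (L : ℤ) * Fint N (fun i => ((σ i : ℕ) : ℤ)))
          + ∑ i, c i * ((σ i : ℕ) : ℤ) : ℤ) : ℝ)

/-- The good-modulus factor `S⁽¹⁾_{q,L,λ}(c)` (for `q = q₁q₂`, `gcd(q₁,2LD) = 1`). -/
def S1 (n : ℕ) (N : Matrix (Fin (n+1)) (Fin (n+1)) ℤ) (q₁ q₂ L : ℕ) (k₁ : ℤ)
    (lam c : Fin (n+1) → ℤ) : ℂ :=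
  ∑ σ : Fin (n+1) → Fin q₁,
    ∑ a ∈ (Finset.range q₁).filter (fun a => Nat.gcd a q₁ = 1),
      eChar q₁
        (((a : ℤ) * (((q₂ : ℤ) * (L : ℤ))^2 * Fint N (fun i => ((σ i : ℕ) : ℤ))
              + (q₂ : ℤ) * ((∑ i, grad N lam i * ((σ i : ℕ) : ℤ)) + k₁))
          + ∑ i, c i * ((σ i : ℕ) : ℤ) : ℤ) : ℝ)

open Classical in
/-- The bad-modulus factor `S⁽²⁾_{q,L,λ}(c)`. -/
def S2 (n : ℕ) (N : Matrix (Fin (n+1)) (Fin (n+1)) ℤ) (q₁ q₂ L : ℕ) (k₂ : ℤ)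
    (lam c : Fin (n+1) → ℤ) : ℂ :=
  ∑ σ ∈ (Finset.univ : Finset (Fin (n+1) → Fin (q₂*L))).filter
      (fun σ => (L : ℤ) ∣ Hpoly N L lam (fun i => (q₁ : ℤ) * ((σ i : ℕ) : ℤ))),
    ∑ a ∈ (Finset.range q₂).filter (fun a => Nat.gcd a q₂ = 1),
      eChar (q₂*L)
        (((a : ℤ) * ((q₁ : ℤ)^2 * (L : ℤ) * Fint N (fun i => ((σ i : ℕ) : ℤ))
              + (q₁ : ℤ) * ((∑ i, grad N lam i * ((σ i : ℕ) : ℤ)) + k₂))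
          + ∑ i, c i * ((σ i : ℕ) : ℤ) : ℤ) : ℝ)

/-- The complete quadratic exponential sum `T_q(G,m;c)`. -/
def Tq (n : ℕ) (NG : Matrix (Fin (n+1)) (Fin (n+1)) ℤ) (q : ℕ) (m : ℤ)
    (c : Fin (n+1) → ℤ) : ℂ :=
  ∑ a ∈ (Finset.range q).filter (fun a => Nat.gcd a q = 1),
    ∑ b : Fin (n+1) → Fin q,
      eChar q (((a : ℤ) * (Fint NG (fun i => ((b i : ℕ) : ℤ)) - m)
        + ∑ i, c i * ((b i : ℕ) : ℤ) : ℤ) : ℝ)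

/-- The counting function whose normalised limit is the local density
`σ_p(W;L,λ)`: the number of `v ∈ (ℤ/p^kℤ)^{n+1}` with `F(v) ≡ 0 mod p^k` and
`v ≡ λ mod p^{ord_p L}`. -/
def localCount (n : ℕ) (N : Matrix (Fin (n+1)) (Fin (n+1)) ℤ) (L : ℕ)
    (lam : Fin (n+1) → ℤ) (p k : ℕ) : ℕ :=
  Nat.card {v : Fin (n+1) → Fin (p^k) //
    ((p : ℤ)^k ∣ Fint N (fun i => ((v i : ℕ) : ℤ))) ∧
    ∀ i, (p : ℤ)^(padicValNat p L) ∣ ((v i : ℕ) : ℤ) - lam i}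

/-- The coordinates `t(x) = Mx` of an integer vector. -/
def tmap (n : ℕ) (M : Matrix (Fin (n+1)) (Fin (n+1)) ℝ) (x : Fin (n+1) → ℤ) :
    Fin (n+1) → ℝ :=
  M.mulVec (fun i => (x i : ℝ))

/-- The counting function `N_W((R,ξ),(L,Γ);B)` for the affine cone. -/
def NW (n : ℕ) (N : Matrix (Fin (n+1)) (Fin (n+1)) ℤ)
    (M : Matrix (Fin (n+1)) (Fin (n+1)) ℝ) (a b : Fin (n+1) → ℝ)
    (B R : ℝ) (L : ℕ) (Γ : Fin (n+1) → ℤ) : ℕ :=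
  Nat.card {x : Fin (n+1) → ℤ //
    x ≠ 0 ∧ Fint N x = 0 ∧ (∀ i, (L : ℤ) ∣ x i - Γ i) ∧
    tmap n M x 0 ≠ 0 ∧
    (∀ j : Fin (n+1), 2 ≤ j.val →
      a j ≤ R * (tmap n M x j / tmap n M x 0) ∧ R * (tmap n M x j / tmap n M x 0) ≤ b j) ∧
    (∀ i, |tmap n M x i| ≤ B)}

/-- Twice the counting function `N_V((R,ξ),(L,Λ);B)` for the projective quadric:
the number of primitive integer vectors on the cone, in the real zoom region,
of height at most `B`, congruent mod `L` to a unit multiple of `Γ`. -/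
def NV (n : ℕ) (N : Matrix (Fin (n+1)) (Fin (n+1)) ℤ)
    (M : Matrix (Fin (n+1)) (Fin (n+1)) ℝ) (a b : Fin (n+1) → ℝ)
    (B R : ℝ) (L : ℕ) (Γ : Fin (n+1) → ℤ) : ℕ :=
  Nat.card {x : Fin (n+1) → ℤ //
    Finset.univ.gcd x = 1 ∧ Fint N x = 0 ∧
    tmap n M x 0 ≠ 0 ∧
    (∀ j : Fin (n+1), 2 ≤ j.val →
      a j ≤ R * (tmap n M x j / tmap n M x 0) ∧ R * (tmap n M x j / tmap n M x 0) ≤ b j) ∧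
    (∀ i, |tmap n M x i| ≤ B) ∧
    (∃ γ : (ZMod L)ˣ, ∀ i, ((x i : ZMod L)) = (γ : ZMod L) * ((Γ i : ZMod L)))}

/-- The value of the singular integral `I_R` for `R ≥ R₀`. -/
def IRval (n : ℕ) (M : Matrix (Fin (n+1)) (Fin (n+1)) ℝ) (a b : Fin (n+1) → ℝ)
    (R : ℝ) : ℝ :=
  2 * (∏ j ∈ Finset.univ.filter (fun j : Fin (n+1) => 2 ≤ j.val), (b j - a j))
    / (((n : ℝ) - 1) * |M.det| * R^(n-1))

/-- The error exponent factor `E_τ(B)`. -/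
def Etau (n : ℕ) (τ B : ℝ) : ℝ :=
  if 5 ≤ n then B ^ (-(((n : ℝ) - 3) * τ / (5 * (n : ℝ) - 7)))
  else B ^ (-(2 * τ / 17))

/-- The error factor `E_τ(1;B)` from the upper-bound range `-1 < τ < 1`. -/
def Etau1 (n : ℕ) (τ B : ℝ) : ℝ :=
  if 5 ≤ n then B ^ (-(((n : ℝ) - 3) * τ / 2))
  else B ^ (-τ) + B ^ (-((1 + τ)/4))

end Quad

/-!
Swap the two sums and fix `a`. Detecting `L ∣ H_{λ,L}(q₁σ)` with the characters `e_L(bH)`,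
`b mod L`, turns the `σ`-sum into `L⁻¹ ∑_b` of unimodular multiples of complete sums
`∑_{σ mod q₂L} e_{q₂L}(aq₁²L·F(σ) + w_{a,b}·σ)` with `w_{a,b} = (a + q₂b)q₁∇F(λ) + c`.
Writing `σ = x + q₂y`, such a sum factors into a sum over `y mod L`, which is `L^{n+1}` if
`L ∣ w_{a,b}` and `0` otherwise, times a Gauss sum modulo `q₂` for the form `aq₁²F`, where
`gcd(aq₁², q₂) = 1`. Weyl differencing bounds the square of the latter by `q₂^{n+1}` times the
number of `h mod q₂` with `q₂ ∣ 2M_F·h`; these satisfy `q₂ ∣ D·h`, so there are at most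
`|D|^{n+1}` of them. Since `gcd(λ, L) = gcd(q₁, L) = 1`, all `t = a + q₂b` with
`L ∣ tq₁∇F(λ) + c` are congruent modulo `L / gcd(L, D)`, so at most `q₂|D|` pairs `(a, b)`
contribute. Altogether `|S⁽²⁾| ≤ |D|^{(n+3)/2} q₂^{(n+3)/2} Lⁿ`, and `gcd(q₂, L)^{1/2} ≥ 1`.
-/

namespace Quad

def eZ (M : ℕ) (t : ℤ) : ℂ := eChar M t

lemma eZ_mul_mul_right (M L : ℕ) [NeZero L] (t : ℤ) : eZ (M * L) (L * t) = eZ M t := by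
  have hL : (L : ℂ) ≠ 0 := NeZero.ne _
  simp only [eZ, eChar]
  congr 1
  push_cast
  field_simp

section Character

variable {M : ℕ} [NeZero M]

lemma eZ_eq_stdAddChar (t : ℤ) : eZ M t = ZMod.stdAddChar (t : ZMod M) := by
  rw [ZMod.stdAddChar_coe, eZ, eChar, Complex.ofReal_intCast]

lemma eZ_add (s t : ℤ) : eZ M (s + t) = eZ M s * eZ M t := by
  simp only [eZ_eq_stdAddChar, Int.cast_add, AddChar.map_add_eq_mul]

lemma eZ_sum {ι : Type*} (s : Finset ι) (f : ι → ℤ) :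
    eZ M (∑ i ∈ s, f i) = ∏ i ∈ s, eZ M (f i) := by
  induction s using Finset.cons_induction with
  | empty => simp [eZ_eq_stdAddChar]
  | cons a s ha ih => rw [Finset.sum_cons, Finset.prod_cons, eZ_add, ih]

lemma eZ_eq_of_dvd_sub {s t : ℤ} (h : (M : ℤ) ∣ s - t) : eZ M s = eZ M t := by
  rw [eZ_eq_stdAddChar, eZ_eq_stdAddChar, (ZMod.intCast_eq_intCast_iff_dvd_sub t s M).2 h]

lemma norm_eZ (t : ℤ) : ‖eZ M t‖ = 1 := by
  rw [eZ_eq_stdAddChar, ZMod.stdAddChar_apply, Circle.norm_coe]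

lemma eZ_mul_conj (s t : ℤ) : eZ M s * starRingEnd ℂ (eZ M t) = eZ M (s - t) := by
  rw [← Complex.inv_eq_conj (norm_eZ t), sub_eq_add_neg, eZ_add, eZ_eq_stdAddChar (-t),
    Int.cast_neg, AddChar.map_neg_eq_inv, ← eZ_eq_stdAddChar]

lemma sum_fin_eZ_mul (u : ℤ) :
    ∑ v : Fin M, eZ M (u * v) = if (M : ℤ) ∣ u then (M : ℂ) else 0 := by
  have hbij : Function.Bijective (fun v : Fin M => ((v : ℕ) : ZMod M)) := by
    refine (Fintype.bijective_iff_injective_and_card _).2 ⟨fun v w h => ?_, by simp [ZMod.card]⟩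
    simpa [ZMod.val_natCast, Nat.mod_eq_of_lt v.isLt, Nat.mod_eq_of_lt w.isLt, Fin.ext_iff]
      using congrArg ZMod.val h
  rw [Fintype.sum_bijective _ hbij _ (fun x => ZMod.stdAddChar (x * (u : ZMod M))) fun v => by
    rw [eZ_eq_stdAddChar, mul_comm]; push_cast; rfl]
  rw [AddChar.sum_mulShift _ (ZMod.isPrimitive_stdAddChar _)]
  simp [ZMod.intCast_zmod_eq_zero_iff_dvd, ZMod.card]

lemma mul_sum_filter_dvd {ι : Type*} (s : Finset ι) (H : ι → ℤ) (f : ι → ℂ)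
    [DecidablePred fun i => (M : ℤ) ∣ H i] :
    (M : ℂ) * ∑ i ∈ s with (M : ℤ) ∣ H i, f i = ∑ b : Fin M, ∑ i ∈ s, f i * eZ M (H i * b) := by
  rw [Finset.sum_comm, Finset.sum_filter, Finset.mul_sum]
  refine Finset.sum_congr rfl fun i _ => ?_
  rw [← Finset.mul_sum, sum_fin_eZ_mul]
  split_ifs <;> simp [mul_comm]

end Character

def intVec {m q : ℕ} (x : Fin m → Fin q) : Fin m → ℤ := fun i => (x i : ℕ)

section QuadraticForm

variable {m : ℕ} {N : Matrix (Fin m) (Fin m) ℤ}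

lemma dotProduct_mulVec_comm (hN : N.IsSymm) (x y : Fin m → ℤ) :
    y ⬝ᵥ N *ᵥ x = x ⬝ᵥ N *ᵥ y := by
  rw [dotProduct_mulVec, ← mulVec_transpose, hN.eq, dotProduct_comm]

lemma even_dotProduct_mulVec_self (hN : N.IsSymm) (hev : ∀ i, Even (N i i)) (x : Fin m → ℤ) :
    Even (x ⬝ᵥ N *ᵥ x) := by
  set U : Matrix (Fin m) (Fin m) ℤ := Matrix.of fun i j => if i < j then N i j else 0
  have hN_eq : N = U + Uᵀ + Matrix.diagonal fun i => N i i := by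
    ext i j
    rcases lt_trichotomy i j with h | rfl | h
    · simp [U, h, h.not_gt, h.ne]
    · simp [U]
    · simp [U, h, h.not_gt, h.ne', hN.apply i j]
  have hUt : x ⬝ᵥ Uᵀ *ᵥ x = x ⬝ᵥ U *ᵥ x := by
    rw [dotProduct_mulVec, vecMul_transpose, dotProduct_comm]
  rw [hN_eq, add_mulVec, add_mulVec, dotProduct_add, dotProduct_add, hUt]
  refine (Even.add_self _).add (Finset.even_sum _ fun i _ => ?_)
  simpa only [mulVec_diagonal] using ((hev i).mul_right (x i)).mul_left (x i)

lemma two_mul_Fint (hN : N.IsSymm) (hev : ∀ i, Even (N i i)) (x : Fin m → ℤ) :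
    2 * Fint N x = x ⬝ᵥ N *ᵥ x := by
  have hsum : ∑ i, ∑ j, N i j * x i * x j = x ⬝ᵥ N *ᵥ x := by
    simp only [dotProduct, mulVec, Finset.mul_sum]
    exact Finset.sum_congr rfl fun i _ => Finset.sum_congr rfl fun j _ => by ring
  rw [Fint, hsum]
  exact Int.mul_ediv_cancel' (even_dotProduct_mulVec_self hN hev x).two_dvd

lemma Fint_add_smul (hN : N.IsSymm) (hev : ∀ i, Even (N i i)) (x y : Fin m → ℤ) (k : ℤ) :
    Fint N (x + k • y) = Fint N x + k * (x ⬝ᵥ N *ᵥ y) + k ^ 2 * Fint N y := by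
  have h := two_mul_Fint hN hev (x + k • y)
  rw [mulVec_add, mulVec_smul, add_dotProduct, dotProduct_add, dotProduct_add, smul_dotProduct,
    dotProduct_smul, dotProduct_smul, smul_dotProduct, dotProduct_mulVec_comm hN x y,
    ← two_mul_Fint hN hev x, ← two_mul_Fint hN hev y] at h
  simp only [smul_eq_mul] at h
  linarith

lemma Fint_add (hN : N.IsSymm) (hev : ∀ i, Even (N i i)) (x y : Fin m → ℤ) :
    Fint N (x + y) = Fint N x + x ⬝ᵥ N *ᵥ y + Fint N y := by
  simpa using Fint_add_smul hN hev x y 1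

end QuadraticForm

section Counting

lemma card_le_gcd_of_dvd_mul_sub {s : Finset ℕ} {n : ℕ} {d : ℤ} (hs : ∀ t ∈ s, t < n)
    (h : ∀ t ∈ s, ∀ t' ∈ s, (n : ℤ) ∣ d * ((t' : ℤ) - t)) : #s ≤ n.gcd d.natAbs := by
  replace h : ∀ t ∈ s, ∀ t' ∈ s, (n : ℤ) ∣ d.natAbs * ((t' : ℤ) - t) := fun t ht t' ht' => by
    rw [← Int.mul_sign_self, mul_right_comm]
    exact (h t ht t' ht').mul_right _
  generalize d.natAbs = d at h
  rcases Nat.eq_zero_or_pos n with rfl | hn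
  · simp [Finset.eq_empty_of_forall_notMem fun t ht => Nat.not_lt_zero t (hs t ht)]
  obtain ⟨g, k, d', hg, hkd, rfl, rfl⟩ := Nat.exists_coprime' (Nat.gcd_pos_of_pos_left d hn)
  have hk : 0 < k := Nat.pos_of_mul_pos_right hn
  have hmod : ∀ t ∈ s, ∀ t' ∈ s, t ≡ t' [MOD k] := fun t ht t' ht' => by
    have h' : (k : ℤ) * g ∣ d' * (t' - t) * g := by
      simpa [mul_comm, mul_left_comm, mul_assoc] using h t ht t' ht'
    exact Nat.modEq_iff_dvd.2 <| (Nat.isCoprime_iff_coprime.2 hkd).dvd_of_dvd_mul_left <|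
      (mul_dvd_mul_iff_right (by exact_mod_cast hg.ne')).1 h'
  rw [Nat.gcd_mul_right, hkd.gcd_eq_one, one_mul]
  calc #s ≤ #(Finset.range g) := Finset.card_le_card_of_injOn (· / k)
        (fun t ht => Finset.mem_range.2 <| (Nat.div_lt_iff_lt_mul hk).2 <| by
          simpa [mul_comm] using hs t ht)
        (fun t ht t' ht' heq => by
          rw [← Nat.div_add_mod t k, ← Nat.div_add_mod t' k, hmod t ht t' ht',
            show t / k = t' / k from heq])
    _ = g := Finset.card_range g

variable {m : ℕ} {N : Matrix (Fin m) (Fin m) ℤ}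

lemma dvd_det_mul_of_dvd_mulVec {k : ℤ} {v : Fin m → ℤ} (h : ∀ i, k ∣ (N *ᵥ v) i) (j : Fin m) :
    k ∣ N.det * v j := by
  have hadj : N.det • v = N.adjugate *ᵥ (N *ᵥ v) := by
    rw [mulVec_mulVec, adjugate_mul, smul_mulVec, one_mulVec]
  rw [← smul_eq_mul, ← Pi.smul_apply, hadj]
  exact Finset.dvd_sum (s := Finset.univ) fun i _ => (h i).mul_left (N.adjugate j i)

lemma dvd_mul_det_of_isCoprime_gcd {k s : ℤ} {v : Fin m → ℤ}
    (hv : IsCoprime k (Finset.univ.gcd v)) (h : ∀ i, k ∣ s * (N *ᵥ v) i) : k ∣ s * N.det := by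
  have hs : ∀ i, k ∣ (N *ᵥ (s • v)) i := fun i => by
    rw [mulVec_smul, Pi.smul_apply, smul_eq_mul]; exact h i
  have hgcd : k ∣ Finset.univ.gcd fun j => s * N.det * v j :=
    Finset.dvd_gcd fun j _ => by
      simpa [mul_assoc, mul_left_comm] using dvd_det_mul_of_dvd_mulVec hs j
  rw [Finset.gcd_mul_left] at hgcd
  exact dvd_normalize_iff.1 (hv.dvd_of_dvd_mul_right hgcd)

lemma card_filter_dvd_mulVec_le (hdet : N.det ≠ 0) (q : ℕ) :
    #{h : Fin m → Fin q | ∀ i, (q : ℤ) ∣ (N *ᵥ intVec h) i} ≤ N.det.natAbs ^ m := by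
  set S : Finset (Fin q) := {v | (q : ℤ) ∣ N.det * (v : ℕ)}
  have hS : #S ≤ N.det.natAbs := by
    rw [← Finset.card_map Fin.valEmbedding]
    refine (card_le_gcd_of_dvd_mul_sub (n := q) ?_ ?_).trans
      (Nat.gcd_le_right _ (Int.natAbs_pos.2 hdet))
    · simp
    · simp only [Finset.mem_map, Fin.valEmbedding_apply, S, Finset.mem_filter, Finset.mem_univ,
        true_and]
      rintro _ ⟨v, hv, rfl⟩ _ ⟨v', hv', rfl⟩
      rw [mul_sub]
      exact dvd_sub hv' hv
  have hsub : ({h | ∀ i, (q : ℤ) ∣ (N *ᵥ intVec h) i} : Finset (Fin m → Fin q)) ⊆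
      Fintype.piFinset fun _ => S := by
    intro h hh
    simp only [S, Fintype.mem_piFinset, Finset.mem_filter, Finset.mem_univ, true_and] at hh ⊢
    exact dvd_det_mul_of_dvd_mulVec hh
  calc _ ≤ #(Fintype.piFinset fun _ : Fin m => S) := Finset.card_le_card hsub
    _ = #S ^ m := by simp
    _ ≤ N.det.natAbs ^ m := Nat.pow_le_pow_left hS m

lemma card_filter_dvd_smul_mulVec_add_le (hdet : N.det ≠ 0) {L : ℕ} {s : ℤ} {lam : Fin m → ℤ}
    (hlam : IsCoprime (L : ℤ) (Finset.univ.gcd lam)) (hs : IsCoprime (L : ℤ) s) (k : ℕ)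
    (c : Fin m → ℤ) :
    #{t ∈ Finset.range (k * L) | ∀ i, (L : ℤ) ∣ ((((t : ℕ) : ℤ) * s) • N *ᵥ lam + c) i} ≤
      k * N.det.natAbs := by
  refine (card_le_gcd_of_dvd_mul_sub (n := k * L) (d := k * N.det) (fun t ht => ?_)
    fun t ht t' ht' => ?_).trans ?_
  · exact Finset.mem_range.1 (Finset.mem_filter.1 ht).1
  · have hdiff : ∀ i, (L : ℤ) ∣ ((t' - t) * s) * (N *ᵥ lam) i := fun i => by
      have h := dvd_sub ((Finset.mem_filter.1 ht').2 i) ((Finset.mem_filter.1 ht).2 i)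
      simp only [Pi.add_apply, Pi.smul_apply, smul_eq_mul] at h
      rwa [add_sub_add_right_eq_sub, ← sub_mul, ← sub_mul] at h
    have hD := dvd_mul_det_of_isCoprime_gcd hlam hdiff
    rw [mul_right_comm] at hD
    rw [Nat.cast_mul, mul_assoc, mul_comm (N.det)]
    exact mul_dvd_mul_left _ (hs.dvd_of_dvd_mul_right hD)
  · rw [Int.natAbs_mul, Int.natAbs_natCast, Nat.gcd_mul_left]
    exact Nat.mul_le_mul_left k (Nat.gcd_le_right _ (Int.natAbs_pos.2 hdet))

lemma card_filter_add_mul_le {s : Finset ℕ} {q : ℕ} (hs : ∀ a ∈ s, a < q) (L : ℕ)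
    (P : ℕ → Prop) [DecidablePred P] :
    #{p ∈ s ×ˢ (Finset.univ : Finset (Fin L)) | P (p.1 + q * p.2)} ≤
      #{t ∈ Finset.range (q * L) | P t} := by
  refine Finset.card_le_card_of_injOn (fun p => p.1 + q * p.2) (fun p hp => ?_)
    fun p hp p' hp' heq => ?_
  · simp only [Finset.mem_coe, Finset.mem_filter, Finset.mem_product, Finset.mem_univ,
      and_true] at hp
    simp only [Finset.mem_coe, Finset.mem_filter, Finset.mem_range]
    refine ⟨?_, hp.2⟩
    have := hs _ hp.1
    have := p.2.isLt
    nlinarith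
  · simp only [Finset.mem_coe, Finset.mem_filter, Finset.mem_product, Finset.mem_univ,
      and_true] at hp hp'
    have hq : 0 < q := (Nat.zero_le _).trans_lt (hs _ hp.1)
    have h1 : p.1 = p'.1 := by
      simpa [Nat.add_mul_mod_self_left, Nat.mod_eq_of_lt (hs _ hp.1),
        Nat.mod_eq_of_lt (hs _ hp'.1)] using congrArg (· % q) heq
    have h2 : (p.2 : ℕ) = p'.2 := by
      simpa [Nat.add_mul_div_left _ _ hq, Nat.div_eq_of_lt (hs _ hp.1),
        Nat.div_eq_of_lt (hs _ hp'.1)] using congrArg (· / q) heq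
    exact Prod.ext h1 (Fin.ext h2)

end Counting

section BoxSums

variable {m : ℕ}

lemma intVec_add {q : ℕ} [NeZero q] (x h : Fin m → Fin q) :
    ∃ d : Fin m → ℤ, intVec (x + h) = intVec x + intVec h + (q : ℤ) • d := by
  refine ⟨fun i => -(((x i : ℕ) + h i) / q : ℕ), funext fun i => ?_⟩
  have hdiv := congrArg (Nat.cast : ℕ → ℤ) (Nat.mod_add_div ((x i : ℕ) + h i) q)
  simp only [intVec, Pi.add_apply, Pi.smul_apply, smul_eq_mul, Fin.val_add]
  push_cast at hdiv ⊢
  linear_combination hdiv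

lemma sum_pi_fin_mul {M : Type*} [AddCommMonoid M] (q L : ℕ) (f : (Fin m → ℤ) → M) :
    ∑ σ : Fin m → Fin (q * L), f (intVec σ) =
      ∑ x : Fin m → Fin q, ∑ y : Fin m → Fin L, f (intVec x + (q : ℤ) • intVec y) := by
  let e : (Fin m → Fin L) × (Fin m → Fin q) ≃ (Fin m → Fin (q * L)) :=
    (Equiv.arrowProdEquivProdArrow _ _ _).symm.trans <|
      Equiv.piCongrRight fun _ => finProdFinEquiv.trans (finCongr (Nat.mul_comm L q))
  have he : ∀ p, intVec (e p) = intVec p.2 + (q : ℤ) • intVec p.1 := fun p => by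
    funext i
    simp [e, intVec]
  rw [← e.sum_comp, Fintype.sum_prod_type, Finset.sum_comm]
  simp only [he]

lemma norm_sum_sq_le_sum_norm_sum_shift {G : Type*} [AddCommGroup G] [Fintype G] (g : G → ℂ) :
    ‖∑ x, g x‖ ^ 2 ≤ ∑ h, ‖∑ x, g (x + h) * starRingEnd ℂ (g x)‖ := by
  have hsq : ((‖∑ x, g x‖ ^ 2 : ℝ) : ℂ) = ∑ h, ∑ x, g (x + h) * starRingEnd ℂ (g x) := by
    rw [Complex.ofReal_pow, ← Complex.mul_conj', map_sum, Finset.sum_mul_sum, Finset.sum_comm]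
    conv_rhs => rw [Finset.sum_comm]
    refine Finset.sum_congr rfl fun x _ => ?_
    rw [← Equiv.sum_comp (Equiv.addLeft x)]
    rfl
  calc ‖∑ x, g x‖ ^ 2 = ‖((‖∑ x, g x‖ ^ 2 : ℝ) : ℂ)‖ := by simp
    _ ≤ _ := by rw [hsq]; exact norm_sum_le _ _

lemma sum_pi_fin_eZ_dotProduct (L : ℕ) [NeZero L] (w : Fin m → ℤ) :
    ∑ y : Fin m → Fin L, eZ L (w ⬝ᵥ intVec y) =
      if ∀ i, (L : ℤ) ∣ w i then (L : ℂ) ^ m else 0 := by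
  simp only [dotProduct, eZ_sum, intVec]
  rw [← Fintype.prod_sum fun i (v : Fin L) => eZ L (w i * (v : ℕ))]
  simp only [sum_fin_eZ_mul, Finset.prod_ite_zero, Finset.mem_univ, true_imp_iff,
    Finset.prod_const, Finset.card_univ, Fintype.card_fin]

end BoxSums

section GaussSums

variable {m : ℕ} {N : Matrix (Fin m) (Fin m) ℤ}

theorem norm_sum_eZ_quadratic_sq_le (hN : N.IsSymm) (hev : ∀ i, Even (N i i))
    (hdet : N.det ≠ 0) {q : ℕ} [NeZero q] {A : ℤ} (hA : IsCoprime (q : ℤ) A) (v : Fin m → ℤ) :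
    ‖∑ x : Fin m → Fin q, eZ q (A * Fint N (intVec x) + v ⬝ᵥ intVec x)‖ ^ 2 ≤
      ((q * N.det.natAbs : ℕ) : ℝ) ^ m := by
  have hshift : ∀ x h : Fin m → Fin q,
      eZ q (A * Fint N (intVec (x + h)) + v ⬝ᵥ intVec (x + h)) *
          starRingEnd ℂ (eZ q (A * Fint N (intVec x) + v ⬝ᵥ intVec x)) =
        eZ q (A * Fint N (intVec h) + v ⬝ᵥ intVec h) *
          eZ q ((A • N *ᵥ intVec h) ⬝ᵥ intVec x) := fun x h => by
    obtain ⟨d, hd⟩ := intVec_add x h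
    rw [eZ_mul_conj, ← eZ_add, hd]
    refine eZ_eq_of_dvd_sub ⟨A * ((intVec x + intVec h) ⬝ᵥ N *ᵥ d + q * Fint N d) + v ⬝ᵥ d, ?_⟩
    rw [Fint_add_smul hN hev, Fint_add hN hev]
    simp only [dotProduct_add, add_dotProduct, dotProduct_smul, smul_dotProduct, smul_eq_mul,
      dotProduct_comm (N *ᵥ intVec h)]
    ring
  calc _ ≤ ∑ h : Fin m → Fin q, ‖∑ x : Fin m → Fin q, eZ q ((A • N *ᵥ intVec h) ⬝ᵥ intVec x)‖ := by
        refine (norm_sum_sq_le_sum_norm_sum_shift _).trans_eq (Finset.sum_congr rfl fun h _ => ?_)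
        simp only [hshift, ← Finset.mul_sum, norm_mul, norm_eZ, one_mul]
    _ = #{h : Fin m → Fin q | ∀ i, (q : ℤ) ∣ (N *ᵥ intVec h) i} * (q : ℝ) ^ m := by
        have hdvd : ∀ y, (q : ℤ) ∣ A * y ↔ (q : ℤ) ∣ y :=
          fun y => ⟨hA.dvd_of_dvd_mul_left, (·.mul_left A)⟩
        simp only [sum_pi_fin_eZ_dotProduct, Pi.smul_apply, smul_eq_mul, hdvd, apply_ite,
          norm_pow, Complex.norm_natCast, norm_zero]
        rw [← Finset.sum_filter, Finset.sum_const, nsmul_eq_mul]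
    _ ≤ (N.det.natAbs ^ m : ℕ) * (q : ℝ) ^ m := by
        gcongr
        exact card_filter_dvd_mulVec_le hdet q
    _ = _ := by push_cast; ring

theorem norm_sum_eZ_mul_quadratic_le (hN : N.IsSymm) (hev : ∀ i, Even (N i i))
    (hdet : N.det ≠ 0) {q L : ℕ} [NeZero q] [NeZero L] {A : ℤ} (hA : IsCoprime (q : ℤ) A)
    (w : Fin m → ℤ) :
    ‖∑ σ : Fin m → Fin (q * L), eZ (q * L) (A * L * Fint N (intVec σ) + w ⬝ᵥ intVec σ)‖ ≤
      if ∀ i, (L : ℤ) ∣ w i then (L : ℝ) ^ m * √(((q * N.det.natAbs : ℕ) : ℝ) ^ m) else 0 := by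
  have hsplit : ∀ x y : Fin m → ℤ,
      eZ (q * L) (A * L * Fint N (x + (q : ℤ) • y) + w ⬝ᵥ (x + (q : ℤ) • y)) =
        eZ (q * L) (A * L * Fint N x + w ⬝ᵥ x) * eZ L (w ⬝ᵥ y) := fun x y => by
    rw [← eZ_mul_mul_right L q, mul_comm L q, ← eZ_add]
    refine eZ_eq_of_dvd_sub ⟨A * (x ⬝ᵥ N *ᵥ y + q * Fint N y), ?_⟩
    rw [Fint_add_smul hN hev, dotProduct_add, dotProduct_smul, smul_eq_mul]
    push_cast
    ring
  rw [sum_pi_fin_mul q L fun u => eZ (q * L) (A * L * Fint N u + w ⬝ᵥ u)]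
  simp only [hsplit, ← Finset.mul_sum, ← Finset.sum_mul, sum_pi_fin_eZ_dotProduct]
  split_ifs with hw
  · choose w' hw' using hw
    have hX : ∀ x : Fin m → Fin q, eZ (q * L) (A * L * Fint N (intVec x) + w ⬝ᵥ intVec x) =
        eZ q (A * Fint N (intVec x) + w' ⬝ᵥ intVec x) := fun x => by
      rw [← eZ_mul_mul_right q L]
      congr 1
      simp only [dotProduct, hw', Finset.mul_sum, mul_add]
      ring_nf
    rw [norm_mul, norm_pow, Complex.norm_natCast, mul_comm]
    gcongr
    simp only [hX]
    exact Real.le_sqrt_of_sq_le (norm_sum_eZ_quadratic_sq_le hN hev hdet hA w')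
  · simp

end GaussSums

lemma sqrt_pow_succ_mul_self {x : ℝ} (hx : 0 ≤ x) (n : ℕ) :
    √(x ^ (n + 1)) * x = x ^ (((n : ℝ) + 3) / 2) := by
  rw [Real.sqrt_eq_rpow, ← Real.rpow_natCast, ← Real.rpow_mul hx, ← Real.rpow_add_one' hx]
  · push_cast; ring_nf
  · positivity

section BadModulus

variable {n : ℕ} {N : Matrix (Fin (n + 1)) (Fin (n + 1)) ℤ}

open Classical in
lemma S2_eq_sum_sum (q₁ q₂ L : ℕ) (k₂ : ℤ) (lam c : Fin (n + 1) → ℤ) :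
    S2 n N q₁ q₂ L k₂ lam c =
      ∑ a ∈ Finset.range q₂ with a.gcd q₂ = 1,
        ∑ σ : Fin (n + 1) → Fin (q₂ * L) with (L : ℤ) ∣ Hpoly N L lam ((q₁ : ℤ) • intVec σ),
          eZ (q₂ * L) (a * (q₁ ^ 2 * L * Fint N (intVec σ) + q₁ * (N *ᵥ lam ⬝ᵥ intVec σ + k₂))
            + c ⬝ᵥ intVec σ) :=
  Finset.sum_comm

theorem norm_S2_le (hN : N.IsSymm) (hev : ∀ i, Even (N i i)) (hdet : N.det ≠ 0)
    {q₁ q₂ L : ℕ} [NeZero q₂] [NeZero L] (hq : Nat.Coprime q₁ q₂) (k₂ : ℤ)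
    (lam c : Fin (n + 1) → ℤ) :
    L * ‖S2 n N q₁ q₂ L k₂ lam c‖ ≤
      #{p ∈ {a ∈ Finset.range q₂ | a.gcd q₂ = 1} ×ˢ (Finset.univ : Finset (Fin L)) |
          ∀ i, (L : ℤ) ∣ ((((p.1 + q₂ * p.2 : ℕ) : ℤ) * q₁) • N *ᵥ lam + c) i} *
        ((L : ℝ) ^ (n + 1) * √(((q₂ * N.det.natAbs : ℕ) : ℝ) ^ (n + 1))) := by
  set K := (L : ℝ) ^ (n + 1) * √(((q₂ * N.det.natAbs : ℕ) : ℝ) ^ (n + 1))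
  have hphase : ∀ (a : ℕ) (b : Fin L) (σ : Fin (n + 1) → Fin (q₂ * L)),
      eZ (q₂ * L) (a * (q₁ ^ 2 * L * Fint N (intVec σ) + q₁ * (N *ᵥ lam ⬝ᵥ intVec σ + k₂))
          + c ⬝ᵥ intVec σ) * eZ L (Hpoly N L lam ((q₁ : ℤ) • intVec σ) * (b : ℕ)) =
        eZ (q₂ * L) (a * q₁ * k₂ + q₂ * (b : ℕ) * (Fint N lam / L)) *
          eZ (q₂ * L) ((a * q₁ ^ 2 : ℤ) * L * Fint N (intVec σ) +
            ((((a + q₂ * b : ℕ) : ℤ) * q₁) • N *ᵥ lam + c) ⬝ᵥ intVec σ) := fun a b σ => by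
    rw [← eZ_mul_mul_right L q₂, mul_comm L q₂, ← eZ_add, ← eZ_add]
    congr 1
    simp only [Hpoly, add_dotProduct, smul_dotProduct, smul_eq_mul]
    change _ + _ * ((_ + N *ᵥ lam ⬝ᵥ ((q₁ : ℤ) • intVec σ)) * _) = _
    rw [dotProduct_smul, smul_eq_mul]
    push_cast
    ring
  rw [S2_eq_sum_sum, ← Complex.norm_natCast L, ← norm_mul, Finset.mul_sum]
  refine ((norm_sum_le _ _).trans (Finset.sum_le_sum (g := fun a : ℕ => ∑ b : Fin L,
    if ∀ i, (L : ℤ) ∣ ((((a + q₂ * b : ℕ) : ℤ) * q₁) • N *ᵥ lam + c) i then K else 0)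
    fun a ha => ?_)).trans_eq ?_
  · have hA : IsCoprime (q₂ : ℤ) (a * q₁ ^ 2) := by
      rw [← Nat.cast_pow, ← Nat.cast_mul, Nat.isCoprime_iff_coprime]
      exact Nat.Coprime.mul_right (Nat.Coprime.symm (Finset.mem_filter.1 ha).2)
        (hq.symm.pow_right 2)
    rw [mul_sum_filter_dvd]
    refine (norm_sum_le _ _).trans (Finset.sum_le_sum fun b _ => ?_)
    simp only [hphase, ← Finset.mul_sum, norm_mul, norm_eZ, one_mul]
    exact norm_sum_eZ_mul_quadratic_le hN hev hdet hA _
  · rw [← Finset.sum_product', ← Finset.sum_filter, Finset.sum_const, nsmul_eq_mul]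

theorem norm_S2_le_rpow (hN : N.IsSymm) (hev : ∀ i, Even (N i i)) (hdet : N.det ≠ 0)
    {q₁ q₂ L : ℕ} [NeZero q₂] [NeZero L] {lam : Fin (n + 1) → ℤ}
    (hlam : IsCoprime (L : ℤ) (Finset.univ.gcd lam)) (hLq₁ : IsCoprime (L : ℤ) q₁)
    (hq : Nat.Coprime q₁ q₂) (k₂ : ℤ) (c : Fin (n + 1) → ℤ) :
    ‖S2 n N q₁ q₂ L k₂ lam c‖ ≤
      (N.det.natAbs : ℝ) ^ (((n : ℝ) + 3) / 2) * (q₂ : ℝ) ^ (((n : ℝ) + 3) / 2) * (L : ℝ) ^ n := by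
  refine le_of_mul_le_mul_left ((norm_S2_le hN hev hdet hq k₂ lam c).trans ?_)
    (Nat.cast_pos.2 (Nat.pos_of_neZero L))
  calc
    _ ≤ ((q₂ * N.det.natAbs : ℕ) : ℝ) *
        ((L : ℝ) ^ (n + 1) * √(((q₂ * N.det.natAbs : ℕ) : ℝ) ^ (n + 1))) := by
      gcongr
      exact (card_filter_add_mul_le (fun a ha => Finset.mem_range.1 (Finset.mem_filter.1 ha).1) L
        fun t => ∀ i, (L : ℤ) ∣ ((((t : ℕ) : ℤ) * q₁) • N *ᵥ lam + c) i).trans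
        (card_filter_dvd_smul_mulVec_add_le hdet hlam hLq₁ q₂ c)
    _ = L * ((N.det.natAbs : ℝ) ^ (((n : ℝ) + 3) / 2) * (q₂ : ℝ) ^ (((n : ℝ) + 3) / 2) *
        (L : ℝ) ^ n) := by
      rw [mul_left_comm, mul_comm ((q₂ * N.det.natAbs : ℕ) : ℝ),
        sqrt_pow_succ_mul_self (Nat.cast_nonneg _), Nat.cast_mul,
        Real.mul_rpow (Nat.cast_nonneg _) (Nat.cast_nonneg _)]
      ring

end BadModulus

theorem S2_bound_general (n : ℕ)
    (N : Matrix (Fin (n+1)) (Fin (n+1)) ℤ) (hNsym : N.IsSymm)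
    (hNeven : ∀ i, Even (N i i)) (hNdet : N.det ≠ 0) :
    ∃ C : ℝ, 0 < C ∧
      ∀ (L : ℕ), 0 < L →
      ∀ lam : Fin (n+1) → ℤ, (L : ℤ) ∣ Fint N lam →
        Int.gcd (Finset.univ.gcd lam) (L : ℤ) = 1 →
      ∀ (q₁ q₂ : ℕ), 0 < q₁ → 0 < q₂ →
        Int.gcd (q₁ : ℤ) (2 * L * N.det) = 1 →
        (∀ p : ℕ, p.Prime → p ∣ q₂ → (p : ℤ) ∣ 2 * L * N.det) →
      ∀ k₂ : ℤ, ((q₂ : ℤ) * L) ∣ (Fint N lam / L - k₂ * q₁) →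
      ∀ c : Fin (n+1) → ℤ,
        ‖S2 n N q₁ q₂ L k₂ lam c‖
          ≤ C * (q₂ : ℝ) ^ (((n : ℝ) + 3)/2) * (L : ℝ)^n
              * ((Nat.gcd q₂ L : ℝ)) ^ ((1 : ℝ)/2) := by
  refine ⟨(N.det.natAbs : ℝ) ^ (((n : ℝ) + 3) / 2),
    Real.rpow_pos_of_pos (Nat.cast_pos.2 (Int.natAbs_pos.2 hNdet)) _, ?_⟩
  intro L hL lam _ hlam q₁ q₂ _ hq₂ hq₁ hq₂_dvd k₂ _ c
  have := NeZero.of_pos hL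
  have := NeZero.of_pos hq₂
  have hq₁' : IsCoprime (q₁ : ℤ) (2 * L * N.det) := Int.isCoprime_iff_gcd_eq_one.2 hq₁
  have hq₁q₂ : Nat.Coprime q₁ q₂ := Nat.coprime_of_dvd fun p hp h₁ h₂ => hp.ne_one <| by
    simpa using Int.isUnit_iff_natAbs_eq.1 <|
      hq₁'.isUnit_of_dvd' (Int.natCast_dvd_natCast.2 h₁) (hq₂_dvd p hp h₂)
  refine (norm_S2_le_rpow hNsym hNeven hNdet (Int.isCoprime_iff_gcd_eq_one.2 hlam).symm
    hq₁'.of_mul_right_left.of_mul_right_right.symm hq₁q₂ k₂ c).trans ?_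
  exact le_mul_of_one_le_right (by positivity)
    (Real.one_le_rpow (by exact_mod_cast Nat.gcd_pos_of_pos_left L hq₂) (by norm_num))

/-- Proposition 4.6 (bound for the bad-modulus factor `S⁽²⁾`):
`|S⁽²⁾_{q,L,λ}(c)| ≪_F q₂^{(n+3)/2} Lⁿ gcd(q₂,L)^{1/2}`, uniformly in `q,c,L,λ`. -/
theorem S2_bound (n : ℕ) (hn : 2 ≤ n)
    (N : Matrix (Fin (n+1)) (Fin (n+1)) ℤ) (hNsym : N.IsSymm)
    (hNeven : ∀ i, Even (N i i)) (hNdet : N.det ≠ 0) :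
    ∃ C : ℝ, 0 < C ∧
      ∀ (L : ℕ), 0 < L →
      ∀ lam : Fin (n+1) → ℤ, (L : ℤ) ∣ Fint N lam →
        Int.gcd (Finset.univ.gcd lam) (L : ℤ) = 1 →
      ∀ (q₁ q₂ : ℕ), 0 < q₁ → 0 < q₂ →
        Int.gcd (q₁ : ℤ) (2 * L * N.det) = 1 →
        (∀ p : ℕ, p.Prime → p ∣ q₂ → (p : ℤ) ∣ 2 * L * N.det) →
      ∀ k₂ : ℤ, ((q₂ : ℤ) * L) ∣ (Fint N lam / L - k₂ * q₁) →
      ∀ c : Fin (n+1) → ℤ,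
        ‖S2 n N q₁ q₂ L k₂ lam c‖
          ≤ C * (q₂ : ℝ) ^ (((n : ℝ) + 3)/2) * (L : ℝ)^n
              * ((Nat.gcd q₂ L : ℝ)) ^ ((1 : ℝ)/2) :=
  S2_bound_general n N hNsym hNeven hNdet

end Quad
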